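/- Consider n agents evolving by the discrete-time algorithm (8) with constants 0 < γ_i ≤ 1 for all i, and suppose Assumptions 1, 2 and 7 hold. Then, for arbitrary initial conditions x_i(0) ∈ ℝ^m: (1) there exists a bounded region of ℝ^m containing x_i(k) for all i and all k; and (2) there exists an integer K such that √(q_i(k)) > ‖∇f_i(v_i(k))‖² for all i and all k ≥ K, i.e., gr_i(k) = ∇f_i(v_i(k))/√(q_i(k)) for all k ≥ K. -/

import Mathlib

/-!
Fix `z ∈ ⋂ Hᵢ`. A convex `fᵢ` with nonempty bounded critical set is coercive, so far from `z`
the normalized gradient step (of squared length at most `T² ‖∇fᵢ‖² / qᵢ ≤ T² / √qᵢ` when it is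
active) does not increase the distance to `z`, while near `z` it has length at most
`T / qᵢ(0)^{1/4}`. Averaging with stochastic weights and the relaxed projection onto `Hᵢ ∋ z`
do not increase the distance to `z` either, so every large enough ball around `z` is invariant.
Since `qᵢ` grows by at least `πT/4` per step, `√qᵢ` eventually exceeds the squared bound of
the gradients on that ball.
-/

open Filter Topology Bornology

/-- `P` is the Euclidean (metric) projection onto the set `C`. -/
def IsProjOn {m : ℕ} (C : Set (EuclideanSpace ℝ (Fin m)))
    (P : EuclideanSpace ℝ (Fin m) → EuclideanSpace ℝ (Fin m)) : Prop :=
  ∀ x, P x ∈ C ∧ ∀ s ∈ C, ‖x - P x‖ ≤ ‖x - s‖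

open Set Metric Real InnerProductSpace

theorem exists_pos_add_le_of_lt_on_sphere {α : Type*} [PseudoMetricSpace α] [ProperSpace α]
    {f : α → ℝ} (hf : Continuous f) {x₀ : α} {r : ℝ} (hlt : ∀ y ∈ sphere x₀ r, f x₀ < f y) :
    ∃ δ > 0, ∀ y ∈ sphere x₀ r, f x₀ + δ ≤ f y := by
  rcases (sphere x₀ r).eq_empty_or_nonempty with hempty | hne
  · exact ⟨1, one_pos, by simp [hempty]⟩
  obtain ⟨y₀, hy₀, hmin⟩ := (isCompact_sphere x₀ r).exists_isMinOn hne hf.continuousOn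
  exact ⟨f y₀ - f x₀, sub_pos.2 (hlt y₀ hy₀),
    fun y hy => by linarith [isMinOn_iff.1 hmin y hy]⟩

theorem inv_mul_le_inv_sqrt_of_sq_le {g s s₀ : ℝ} (hs₀ : 0 < s₀) (hs : s₀ ≤ s) (hg : g ^ 2 ≤ s) :
    s⁻¹ * g ≤ (√s₀)⁻¹ :=
  calc s⁻¹ * g ≤ s⁻¹ * √s :=
        mul_le_mul_of_nonneg_left ((le_abs_self g).trans (abs_le_sqrt hg))
          (inv_nonneg.2 (hs₀.le.trans hs))
    _ = (√s)⁻¹ := by rw [inv_mul_eq_div, sqrt_div_self', one_div]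
    _ ≤ (√s₀)⁻¹ := inv_anti₀ (sqrt_pos.2 hs₀) (sqrt_le_sqrt hs)

section Convex

variable {E : Type*} [NormedAddCommGroup E] [InnerProductSpace ℝ E]

theorem ConvexOn.add_mul_dist_div_le {f : E → ℝ} (hf : ConvexOn ℝ univ f) {x₀ p : E}
    {r δ : ℝ} (hr : 0 < r) (hδ : ∀ y ∈ sphere x₀ r, f x₀ + δ ≤ f y) (hp : r ≤ dist p x₀) :
    f x₀ + δ * (dist p x₀ / r) ≤ f p := by
  set t := r / dist p x₀
  have hd : 0 < dist p x₀ := hr.trans_le hp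
  have ht : 0 < t := div_pos hr hd
  have ht1 : t ≤ 1 := div_le_one_of_le₀ hp hd.le
  have hu : x₀ + t • (p - x₀) ∈ sphere x₀ r := by
    rw [mem_sphere, dist_eq_norm, add_sub_cancel_left, norm_smul, norm_of_nonneg ht.le,
      ← dist_eq_norm, div_mul_cancel₀ _ hd.ne']
  have hcomb : (1 - t) • x₀ + t • p = x₀ + t • (p - x₀) := by module
  have hconv := hf.2 (mem_univ x₀) (mem_univ p) (sub_nonneg.2 ht1) ht.le (by ring)
  rw [hcomb, smul_eq_mul, smul_eq_mul] at hconv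
  have : δ ≤ t * (f p - f x₀) := by linarith [hδ _ hu]
  calc f x₀ + δ * (dist p x₀ / r) = f x₀ + δ / t := by rw [div_div_eq_mul_div, mul_div_assoc]
    _ ≤ f p := by linarith [(div_le_iff₀' ht).2 this]

theorem norm_sub_smul_le_norm {d G : E} {τ : ℝ} (hτ : 0 ≤ τ)
    (h : τ * ‖G‖ ^ 2 ≤ 2 * ⟪G, d⟫_ℝ) : ‖d - τ • G‖ ≤ ‖d‖ := by
  refine (sq_le_sq₀ (norm_nonneg _) (norm_nonneg _)).1 ?_
  rw [norm_sub_sq_real, real_inner_smul_right, norm_smul, norm_of_nonneg hτ, real_inner_comm]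
  nlinarith

variable [CompleteSpace E]

theorem ConvexOn.inner_gradient_le_sub {f : E → ℝ} (hf : ConvexOn ℝ univ f) {x : E}
    (hd : DifferentiableAt ℝ f x) (y : E) : ⟪gradient f x, y - x⟫_ℝ ≤ f y - f x := by
  have hline : ConvexOn ℝ univ (f ∘ (AffineMap.lineMap x y : ℝ →ᵃ[ℝ] E)) := by
    simpa using hf.comp_affineMap (AffineMap.lineMap x y : ℝ →ᵃ[ℝ] E)
  have hderiv :
      HasDerivAt (f ∘ (AffineMap.lineMap x y : ℝ →ᵃ[ℝ] E)) ⟪gradient f x, y - x⟫_ℝ 0 := by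
    have hf' : HasFDerivAt f (toDual ℝ E (gradient f x)) (AffineMap.lineMap x y (0 : ℝ)) := by
      simpa using hd.hasGradientAt.hasFDerivAt
    simpa using hf'.comp_hasDerivAt 0 AffineMap.hasDerivAt_lineMap
  simpa [slope_def_field] using
    hline.le_slope_of_hasDerivAt (mem_univ 0) (mem_univ 1) one_pos hderiv

theorem lt_of_forall_le_of_gradient_ne_zero {f : E → ℝ} {x₀ y : E} (hmin : ∀ y, f x₀ ≤ f y)
    (hy : gradient f y ≠ 0) : f x₀ < f y := by
  refine (hmin y).lt_of_ne fun heq => hy ?_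
  have : IsLocalMin f y := Eventually.of_forall fun z => heq ▸ hmin z
  rw [gradient, this.fderiv_eq_zero, map_zero]

/-- Testing the gradient inequality against the unit vector `∇f p / ‖∇f p‖`. -/
theorem ConvexOn.norm_gradient_le_sub {f : E → ℝ} (hf : ConvexOn ℝ univ f) {p : E}
    (hd : DifferentiableAt ℝ f p) {C : ℝ} (hC : ∀ y ∈ closedBall p 1, f y ≤ C) :
    ‖gradient f p‖ ≤ C - f p := by
  set G := gradient f p
  have hunit : p + ‖G‖⁻¹ • G ∈ closedBall p 1 := by
    rw [mem_closedBall, dist_eq_norm, add_sub_cancel_left, norm_smul, norm_inv, norm_norm]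
    exact inv_mul_le_one
  have hinner : ⟪G, p + ‖G‖⁻¹ • G - p⟫_ℝ = ‖G‖ := by
    rw [add_sub_cancel_left, real_inner_smul_right, real_inner_self_eq_norm_sq]
    rcases eq_or_ne ‖G‖ 0 with h | h
    · simp [h]
    · field_simp
  linarith [hf.inner_gradient_le_sub hd (p + ‖G‖⁻¹ • G), hC _ hunit]

variable [FiniteDimensional ℝ E]

/-- `f` is minimal on its critical set, hence strictly larger on a sphere enclosing it, and
convexity turns that gap into linear growth. -/
theorem ConvexOn.tendsto_cobounded_atTop {f : E → ℝ} (hf : ConvexOn ℝ univ f)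
    (hd : Differentiable ℝ f) (hne : {x | gradient f x = 0}.Nonempty)
    (hbd : IsBounded {x | gradient f x = 0}) : Tendsto f (cobounded E) atTop := by
  obtain ⟨x₀, hx₀⟩ := hne
  have hmin : ∀ y, f x₀ ≤ f y := fun y => by
    simpa [show gradient f x₀ = 0 from hx₀] using hf.inner_gradient_le_sub (hd x₀) y
  obtain ⟨r, hr⟩ := hbd.subset_ball x₀
  have hr0 : 0 < r := pos_of_mem_ball (hr hx₀)
  have hlt : ∀ y ∈ sphere x₀ r, f x₀ < f y := fun y hy =>
    lt_of_forall_le_of_gradient_ne_zero hmin fun h0 =>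
      (mem_ball.1 (hr h0)).ne (mem_sphere.1 hy)
  obtain ⟨δ, hδ, hgap⟩ := exists_pos_add_le_of_lt_on_sphere hd.continuous hlt
  have hdist := tendsto_dist_right_cobounded_atTop x₀
  refine tendsto_atTop_mono' _ ?_
    (tendsto_atTop_add_const_left _ (f x₀) (hdist.atTop_mul_const (div_pos hδ hr0)))
  filter_upwards [hdist.eventually_ge_atTop r] with p hp
  rw [mul_div_left_comm]
  exact hf.add_mul_dist_div_le hr0 hgap hp

theorem ConvexOn.exists_norm_gradient_le {f : E → ℝ} (hf : ConvexOn ℝ univ f)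
    (hd : Differentiable ℝ f) (z : E) (R : ℝ) :
    ∃ Γ, ∀ p ∈ closedBall z R, ‖gradient f p‖ ≤ Γ := by
  obtain ⟨C, hC⟩ := (isCompact_closedBall z (R + 1)).exists_bound_of_continuousOn
    hd.continuous.continuousOn
  refine ⟨C + C, fun p hp => ?_⟩
  have hsub : closedBall p 1 ⊆ closedBall z (R + 1) :=
    closedBall_subset_closedBall' (by linarith [mem_closedBall.1 hp])
  have hfp := (abs_le.1 (hC p (closedBall_subset_closedBall (by linarith) hp))).1
  have := hf.norm_gradient_le_sub (hd p) fun y hy => (abs_le.1 (hC y (hsub hy))).2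
  linarith

theorem eventually_sq_norm_gradient_lt_sqrt {ι : Type*} [Finite ι] {f : ι → E → ℝ}
    (hf : ∀ i, ConvexOn ℝ univ (f i)) (hd : ∀ i, Differentiable ℝ (f i)) {v : ι → ℕ → E}
    {z : E} {R : ℝ} (hv : ∀ i k, v i k ∈ closedBall z R) {q : ι → ℕ → ℝ}
    (hq : ∀ i, Tendsto (q i) atTop atTop) :
    ∀ᶠ k in atTop, ∀ i, ‖gradient (f i) (v i k)‖ ^ 2 < √(q i k) := by
  choose Γ hΓ using fun i => (hf i).exists_norm_gradient_le (hd i) z R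
  refine eventually_all.2 fun i => ((hq i).eventually_gt_atTop ((Γ i ^ 2) ^ 2)).mono
    fun k hk => ?_
  calc ‖gradient (f i) (v i k)‖ ^ 2 ≤ Γ i ^ 2 := by gcongr; exact hΓ i _ (hv i k)
    _ < √(q i k) := (lt_sqrt (by positivity)).2 hk

/-- Far from `z` the normalized gradient step moves towards `z` (coercivity makes
`⟪∇f p, p - z⟫ ≥ f p - f z` large), while near `z` it has length at most `T / √s₀`. -/
theorem ConvexOn.exists_forall_ge_gradient_step_mem_closedBall {f : E → ℝ}
    (hf : ConvexOn ℝ univ f) (hd : Differentiable ℝ f) (hne : {x | gradient f x = 0}.Nonempty)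
    (hbd : IsBounded {x | gradient f x = 0}) (z : E) {T s₀ : ℝ} (hT : 0 < T) (hs₀ : 0 < s₀) :
    ∃ M, ∀ R, M ≤ R → ∀ p ∈ closedBall z R, ∀ s, s₀ ≤ s → ‖gradient f p‖ ^ 2 ≤ s →
      p - T • (s⁻¹ • gradient f p) ∈ closedBall z R := by
  obtain ⟨M₀, -, hM₀⟩ := (hasBasis_cobounded_compl_closedBall z).eventually_iff.1
    ((hf.tendsto_cobounded_atTop hd hne hbd).eventually_ge_atTop (f z + T / 2))
  refine ⟨M₀ + T * (√s₀)⁻¹, fun R hR p hp s hs hG => ?_⟩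
  have hs_pos : 0 < s := hs₀.trans_le hs
  rw [mem_closedBall, dist_eq_norm] at hp ⊢
  rw [smul_smul, sub_right_comm]
  by_cases hfar : M₀ < ‖p - z‖
  · have hfp : f z + T / 2 ≤ f p := hM₀ (by simpa [dist_eq_norm] using hfar)
    have hinner : f p - f z ≤ ⟪gradient f p, p - z⟫_ℝ := by
      have := hf.inner_gradient_le_sub (hd p) z
      rw [← neg_sub p z, inner_neg_right] at this
      linarith
    refine (norm_sub_smul_le_norm (by positivity) ?_).trans hp
    calc T * s⁻¹ * ‖gradient f p‖ ^ 2 ≤ T * s⁻¹ * s := by gcongr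
      _ = T := by field_simp
      _ ≤ 2 * ⟪gradient f p, p - z⟫_ℝ := by linarith
  · calc ‖p - z - (T * s⁻¹) • gradient f p‖ ≤ ‖p - z‖ + ‖(T * s⁻¹) • gradient f p‖ :=
          norm_sub_le _ _
      _ = ‖p - z‖ + T * (s⁻¹ * ‖gradient f p‖) := by
          rw [norm_smul, Real.norm_of_nonneg (by positivity), mul_assoc]
      _ ≤ M₀ + T * (√s₀)⁻¹ := by
          gcongr
          · exact not_lt.1 hfar
          · exact inv_mul_le_inv_sqrt_of_sq_le hs₀ hs hG
      _ ≤ R := hR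

end Convex

section Projection

variable {m : ℕ} {C : Set (EuclideanSpace ℝ (Fin m))}
  {P : EuclideanSpace ℝ (Fin m) → EuclideanSpace ℝ (Fin m)}

/-- The variational inequality `⟪u - P u, s - P u⟫ ≤ 0` makes `P` nonexpansive towards `C`. -/
theorem IsProjOn.norm_sub_le (hP : IsProjOn C P) (hC : Convex ℝ C)
    (u : EuclideanSpace ℝ (Fin m)) {s : EuclideanSpace ℝ (Fin m)} (hs : s ∈ C) :
    ‖P u - s‖ ≤ ‖u - s‖ := by
  obtain ⟨hmem, hnear⟩ := hP u
  have : Nonempty C := ⟨⟨P u, hmem⟩⟩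
  have hbdd : BddBelow (range fun w : C => ‖u - (w : EuclideanSpace ℝ (Fin m))‖) :=
    ⟨0, by rintro _ ⟨w, rfl⟩; exact norm_nonneg _⟩
  have hinf : ‖u - P u‖ = ⨅ w : C, ‖u - (w : EuclideanSpace ℝ (Fin m))‖ :=
    le_antisymm (le_ciInf fun w => hnear w w.2) (ciInf_le hbdd ⟨P u, hmem⟩)
  have hvar := (norm_eq_iInf_iff_real_inner_le_zero hC hmem).1 hinf s hs
  have hsplit : ‖u - s‖ ^ 2 = ‖u - P u‖ ^ 2 - 2 * ⟪u - P u, s - P u⟫_ℝ + ‖P u - s‖ ^ 2 := by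
    rw [← sub_add_sub_cancel u (P u) s, norm_add_sq_real, ← neg_sub s (P u), inner_neg_right]
    ring
  refine (sq_le_sq₀ (norm_nonneg _) (norm_nonneg _)).1 ?_
  linarith [sq_nonneg ‖u - P u‖]

theorem IsProjOn.relaxed_mem_closedBall (hP : IsProjOn C P) (hC : Convex ℝ C)
    {s u : EuclideanSpace ℝ (Fin m)} (hs : s ∈ C) {R γ : ℝ} (hγ : γ ∈ Icc (0 : ℝ) 1)
    (hu : u ∈ closedBall s R) : (1 - γ) • u + γ • P u ∈ closedBall s R :=
  convex_closedBall s R hu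
    (by rw [mem_closedBall, dist_eq_norm] at hu ⊢; exact (hP.norm_sub_le hC u hs).trans hu)
    (sub_nonneg.2 hγ.2) hγ.1 (by ring)

end Projection

theorem pi_div_four_le_arctan_exp {t : ℝ} (ht : 0 ≤ t) : π / 4 ≤ arctan (exp t) := by
  rw [← arctan_one]
  exact arctan_strictMono.monotone (one_le_exp ht)

theorem tendsto_atTop_of_add_le_succ {u : ℕ → ℝ} {c : ℝ} (hc : 0 < c)
    (h : ∀ k, u k + c ≤ u (k + 1)) : Tendsto u atTop atTop := by
  have hlin : ∀ k : ℕ, u 0 + k * c ≤ u k := by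
    intro k
    induction k with
    | zero => simp
    | succ k ih => push_cast; linarith [h k]
  exact tendsto_atTop_mono hlin
    (tendsto_atTop_add_const_left _ _ (tendsto_natCast_atTop_atTop.atTop_mul_const hc))

theorem stmt_14_general {m n : ℕ}
    -- local objective functions
    (f : Fin n → EuclideanSpace ℝ (Fin m) → ℝ)
    (hdiff : ∀ i, Differentiable ℝ (f i))
    (hconv : ∀ i, ConvexOn ℝ Set.univ (f i))
    -- Assumption 1: each Xᵢ = {x | ∇fᵢ(x) = 0} is nonempty and bounded
    (hXne : ∀ i, ({x : EuclideanSpace ℝ (Fin m) | gradient (f i) x = 0}).Nonempty)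
    (hXbd : ∀ i, IsBounded {x : EuclideanSpace ℝ (Fin m) | gradient (f i) x = 0})
    -- constraint sets and Assumption 2: H = ⋂ᵢ Hᵢ ≠ ∅
    (H : Fin n → Set (EuclideanSpace ℝ (Fin m)))
    (hHcv : ∀ i, Convex ℝ (H i))
    (hHcap : (⋂ i, H i).Nonempty)
    (P : Fin n → EuclideanSpace ℝ (Fin m) → EuclideanSpace ℝ (Fin m))
    (hP : ∀ i, IsProjOn (H i) (P i))
    -- sample time
    (T : ℝ) (hT : 0 < T)
    -- Assumption 7: doubly stochastic weights, diagonal and nonzero entries ≥ η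
    (a : ℕ → Fin n → Fin n → ℝ)
    (ha_nn : ∀ k i j, 0 ≤ a k i j)
    (ha_row : ∀ k i, ∑ j, a k i j = 1)
    -- relaxation parameters 0 < γᵢ ≤ 1
    (γ : Fin n → ℝ) (hγ : ∀ i, γ i ∈ Set.Ioc (0 : ℝ) 1)
    -- algorithm (8)
    (q : Fin n → ℕ → ℝ)
    (x v gr w : Fin n → ℕ → EuclideanSpace ℝ (Fin m))
    (hq0 : ∀ i, 0 < q i 0)
    (hq : ∀ i k, q i (k + 1) = q i k + Real.arctan (Real.exp ‖x i k‖) * T)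
    (hv : ∀ i k, v i k = ∑ j, a k i j • x j k)
    (hgr : ∀ i k, gr i k =
      if Real.sqrt (q i k) ≤ ‖gradient (f i) (v i k)‖ ^ 2 then 0
      else (Real.sqrt (q i k))⁻¹ • gradient (f i) (v i k))
    (hw : ∀ i k, w i k = v i k - T • gr i k)
    (hx : ∀ i k, x i (k + 1) = (1 - γ i) • w i k + γ i • P i (w i k)) :
    -- (1) boundedness
    (∃ R : ℝ, ∀ i, ∀ k : ℕ, ‖x i k‖ ≤ R) ∧
    -- (2) the gradient branch is eventually active
    ∃ K : ℕ, ∀ i, ∀ k : ℕ, K ≤ k →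
      ‖gradient (f i) (v i k)‖ ^ 2 < Real.sqrt (q i k) ∧
      gr i k = (Real.sqrt (q i k))⁻¹ • gradient (f i) (v i k) := by
  obtain ⟨z, hz⟩ := hHcap
  rw [mem_iInter] at hz
  have hq_step : ∀ i k, q i k + π / 4 * T ≤ q i (k + 1) := fun i k => by
    rw [hq]; gcongr; exact pi_div_four_le_arctan_exp (norm_nonneg _)
  have hq_mono : ∀ i, Monotone (q i) := fun i => monotone_nat_of_le_succ fun k =>
    (le_add_of_nonneg_right (by positivity)).trans (hq_step i k)
  choose M hM using fun i => (hconv i).exists_forall_ge_gradient_step_mem_closedBall (hdiff i)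
    (hXne i) (hXbd i) z hT (sqrt_pos.2 (hq0 i))
  obtain ⟨R, hR⟩ := Finite.bddAbove_range fun i => max (M i) (dist (x i 0) z)
  have hv_mem : ∀ k, (∀ j, x j k ∈ closedBall z R) → ∀ i, v i k ∈ closedBall z R :=
    fun k hx_mem i => hv i k ▸ (convex_closedBall z R).sum_mem (fun j _ => ha_nn k i j)
      (ha_row k i) fun j _ => hx_mem j
  have hx_mem : ∀ k i, x i k ∈ closedBall z R := by
    intro k
    induction k with
    | zero => exact fun i => (le_max_right _ _).trans (hR (mem_range_self i))
    | succ k ih =>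
      intro i
      have hw_mem : w i k ∈ closedBall z R := by
        rw [hw, hgr]
        split_ifs with hsmall
        · simpa using hv_mem k ih i
        · exact hM i R ((le_max_left _ _).trans (hR (mem_range_self i))) _ (hv_mem k ih i) _
            (sqrt_le_sqrt (hq_mono i k.zero_le)) (not_le.1 hsmall).le
      rw [hx]
      exact (hP i).relaxed_mem_closedBall (hHcv i) (hz i) (Ioc_subset_Icc_self (hγ i)) hw_mem
  refine ⟨⟨‖z‖ + R, fun i k => norm_le_of_mem_closedBall (hx_mem k i)⟩, ?_⟩
  obtain ⟨K, hK⟩ := eventually_atTop.1 <| eventually_sq_norm_gradient_lt_sqrt hconv hdiff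
    (fun i k => hv_mem k (fun j => hx_mem k j) i)
    fun i => tendsto_atTop_of_add_le_succ (by positivity) (hq_step i)
  exact ⟨K, fun i k hk => ⟨hK k hk i, by rw [hgr, if_neg (hK k hk i).not_ge]⟩⟩

/-- **Discrete-time algorithm (8) with `0 < γᵢ ≤ 1`: boundedness and
eventual activation of the gradient term.** Under Assumptions 1, 2 and 7,
all agents remain in a bounded region and, after some time `K`,
`√qᵢ(k) > ‖∇fᵢ(vᵢ(k))‖²`, so that `grᵢ(k) = ∇fᵢ(vᵢ(k))/√qᵢ(k)`. -/
theorem stmt_14 {m n : ℕ} (hn : 1 ≤ n)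
    -- local objective functions
    (f : Fin n → EuclideanSpace ℝ (Fin m) → ℝ)
    (hdiff : ∀ i, Differentiable ℝ (f i))
    (hconv : ∀ i, ConvexOn ℝ Set.univ (f i))
    -- Assumption 1: each Xᵢ = {x | ∇fᵢ(x) = 0} is nonempty and bounded
    (hXne : ∀ i, ({x : EuclideanSpace ℝ (Fin m) | gradient (f i) x = 0}).Nonempty)
    (hXbd : ∀ i, IsBounded {x : EuclideanSpace ℝ (Fin m) | gradient (f i) x = 0})
    -- constraint sets and Assumption 2: H = ⋂ᵢ Hᵢ ≠ ∅
    (H : Fin n → Set (EuclideanSpace ℝ (Fin m)))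
    (hHne : ∀ i, (H i).Nonempty) (hHcl : ∀ i, IsClosed (H i)) (hHcv : ∀ i, Convex ℝ (H i))
    (hHcap : (⋂ i, H i).Nonempty)
    (P : Fin n → EuclideanSpace ℝ (Fin m) → EuclideanSpace ℝ (Fin m))
    (hP : ∀ i, IsProjOn (H i) (P i))
    -- sample time
    (T : ℝ) (hT : 0 < T)
    -- Assumption 7: doubly stochastic weights, diagonal and nonzero entries ≥ η
    (η : ℝ) (hη0 : 0 < η) (hη1 : η ≤ 1)
    (a : ℕ → Fin n → Fin n → ℝ)
    (ha_nn : ∀ k i j, 0 ≤ a k i j)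
    (ha_diag : ∀ k i, η ≤ a k i i)
    (ha_η : ∀ k i j, a k i j ≠ 0 → η ≤ a k i j)
    (ha_col : ∀ k j, ∑ i, a k i j = 1)
    (ha_row : ∀ k i, ∑ j, a k i j = 1)
    -- relaxation parameters 0 < γᵢ ≤ 1
    (γ : Fin n → ℝ) (hγ : ∀ i, γ i ∈ Set.Ioc (0 : ℝ) 1)
    -- algorithm (8)
    (q : Fin n → ℕ → ℝ)
    (x v gr w : Fin n → ℕ → EuclideanSpace ℝ (Fin m))
    (hq0 : ∀ i, 0 < q i 0)
    (hq : ∀ i k, q i (k + 1) = q i k + Real.arctan (Real.exp ‖x i k‖) * T)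
    (hv : ∀ i k, v i k = ∑ j, a k i j • x j k)
    (hgr : ∀ i k, gr i k =
      if Real.sqrt (q i k) ≤ ‖gradient (f i) (v i k)‖ ^ 2 then 0
      else (Real.sqrt (q i k))⁻¹ • gradient (f i) (v i k))
    (hw : ∀ i k, w i k = v i k - T • gr i k)
    (hx : ∀ i k, x i (k + 1) = (1 - γ i) • w i k + γ i • P i (w i k)) :
    -- (1) boundedness
    (∃ R : ℝ, ∀ i, ∀ k : ℕ, ‖x i k‖ ≤ R) ∧
    -- (2) the gradient branch is eventually active
    ∃ K : ℕ, ∀ i, ∀ k : ℕ, K ≤ k →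
      ‖gradient (f i) (v i k)‖ ^ 2 < Real.sqrt (q i k) ∧
      gr i k = (Real.sqrt (q i k))⁻¹ • gradient (f i) (v i k) :=
  stmt_14_general f hdiff hconv hXne hXbd H hHcv hHcap P hP T hT a ha_nn ha_row γ hγ q x v gr w hq0
    hq hv hgr hw hx
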